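/- arXiv:1711.07706 — 3 statements merged into one kernel-verified Lean document; each statement's English description precedes it below -/
import Mathlib

section
/- Let S₁ and S₂ be two finite multisets of positive integers. If the formal power series ∏_{l ∈ S₁} (1 - u^l)^{-1} equals ∏_{m ∈ S₂} (1 - u^m)^{-1} as formal power series over ℚ (or as holomorphic functions on the open unit disc), then S₁ = S₂ as multisets. -/
/-!
Write `P(S) = ∏_{l ∈ S} (1 - X^l)`; the Euler product of `S` is `P(S)⁻¹`, so equal Euler
products give `P(S₁) = P(S₂)`. If all elements of `S` are at least `d > 0`, the coefficient of
`X^d` in `P(S)` is minus the multiplicity of `d` in `S`. So by strong induction on `d`: once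
the parts of `S₁` and `S₂` below `d` agree, cancelling the invertible factor they contribute to
`P` leaves products over elements `≥ d`, whose `X^d`-coefficients show that `d` has the same
multiplicity in both.
-/

open PowerSeries

namespace PowerSeries

section CommRing

variable (R : Type*) [CommRing R]

noncomputable def prodOneSubXPow (S : Multiset ℕ) : R⟦X⟧ :=
  (S.map fun l => 1 - X ^ l).prod

variable {R}

theorem prodOneSubXPow_add (S T : Multiset ℕ) :
    prodOneSubXPow R (S + T) = prodOneSubXPow R S * prodOneSubXPow R T := by
  simp only [prodOneSubXPow, Multiset.map_add, Multiset.prod_add]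

theorem constantCoeff_prodOneSubXPow {S : Multiset ℕ} (hS : ∀ l ∈ S, 0 < l) :
    constantCoeff (prodOneSubXPow R S) = 1 := by
  rw [prodOneSubXPow, map_multiset_prod, Multiset.map_map]
  refine Multiset.prod_eq_one fun c hc => ?_
  obtain ⟨l, hl, rfl⟩ := Multiset.mem_map.1 hc
  simp [zero_pow (hS l hl).ne']

theorem isUnit_prodOneSubXPow {S : Multiset ℕ} (hS : ∀ l ∈ S, 0 < l) :
    IsUnit (prodOneSubXPow R S) := by
  rw [isUnit_iff_constantCoeff, constantCoeff_prodOneSubXPow hS]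
  exact isUnit_one

theorem coeff_prodOneSubXPow_of_le {d : ℕ} (hd : 0 < d) {S : Multiset ℕ}
    (hS : ∀ l ∈ S, d ≤ l) : coeff d (prodOneSubXPow R S) = -(S.count d : R) := by
  induction S using Multiset.induction with
  | empty => simp [prodOneSubXPow, coeff_one, hd.ne']
  | cons a S ih =>
    have hSd : ∀ l ∈ S, d ≤ l := fun l hl => hS l (Multiset.mem_cons_of_mem hl)
    have hda : d ≤ a := hS a (Multiset.mem_cons_self a S)
    have hrest :
        prodOneSubXPow R (a ::ₘ S) = prodOneSubXPow R S - X ^ a * prodOneSubXPow R S := by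
      simp only [prodOneSubXPow, Multiset.map_cons, Multiset.prod_cons, sub_mul, one_mul]
    rw [hrest, map_sub, coeff_X_pow_mul', ih hSd]
    rcases hda.eq_or_lt with rfl | hlt
    · rw [if_pos le_rfl, Nat.sub_self, coeff_zero_eq_constantCoeff,
        constantCoeff_prodOneSubXPow fun l hl => hd.trans_le (hSd l hl), Multiset.count_cons_self]
      push_cast
      ring
    · rw [if_neg (not_le.2 hlt), Multiset.count_cons_of_ne hlt.ne, sub_zero]

variable [CharZero R]

theorem count_eq_of_prodOneSubXPow_eq {S₁ S₂ : Multiset ℕ} (hS₁ : ∀ l ∈ S₁, 0 < l)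
    (hS₂ : ∀ l ∈ S₂, 0 < l) (h : prodOneSubXPow R S₁ = prodOneSubXPow R S₂) (d : ℕ)
    (hbelow : ∀ m < d, S₁.count m = S₂.count m) : S₁.count d = S₂.count d := by
  rcases d.eq_zero_or_pos with rfl | hd
  · rw [Multiset.count_eq_zero.2 fun h0 => (hS₁ 0 h0).false,
      Multiset.count_eq_zero.2 fun h0 => (hS₂ 0 h0).false]
  have hlow : S₁.filter (· < d) = S₂.filter (· < d) := by
    ext m
    simp only [Multiset.count_filter]
    split_ifs with hm
    exacts [hbelow m hm, rfl]
  have hhigh :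
      prodOneSubXPow R (S₁.filter (¬ · < d)) = prodOneSubXPow R (S₂.filter (¬ · < d)) := by
    refine (isUnit_prodOneSubXPow (S := S₁.filter (· < d))
      fun l hl => hS₁ l (Multiset.mem_of_mem_filter hl)).mul_left_cancel ?_
    rw [← prodOneSubXPow_add, Multiset.filter_add_not, hlow, ← prodOneSubXPow_add,
      Multiset.filter_add_not, h]
  have hcoeff : ∀ S : Multiset ℕ,
      coeff d (prodOneSubXPow R (S.filter (¬ · < d))) = -(S.count d : R) := fun S => by
    rw [coeff_prodOneSubXPow_of_le hd fun l hl => not_lt.1 (Multiset.mem_filter.1 hl).2,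
      Multiset.count_filter_of_pos (p := (¬ · < d)) (lt_irrefl d)]
  have := congrArg (coeff d) hhigh
  rwa [hcoeff, hcoeff, neg_inj, Nat.cast_inj] at this

theorem eq_of_prodOneSubXPow_eq {S₁ S₂ : Multiset ℕ} (hS₁ : ∀ l ∈ S₁, 0 < l)
    (hS₂ : ∀ l ∈ S₂, 0 < l) (h : prodOneSubXPow R S₁ = prodOneSubXPow R S₂) : S₁ = S₂ :=
  Multiset.ext.2 fun d => Nat.strong_induction_on d fun d hbelow =>
    count_eq_of_prodOneSubXPow_eq hS₁ hS₂ h d hbelow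

end CommRing

theorem prod_map_inv_one_sub_X_pow_mul_prodOneSubXPow {k : Type*} [Field k]
    {S : Multiset ℕ} (hS : ∀ l ∈ S, 0 < l) :
    (S.map fun l => (1 - X ^ l : k⟦X⟧)⁻¹).prod * prodOneSubXPow k S = 1 := by
  rw [prodOneSubXPow, ← Multiset.prod_map_mul]
  refine Multiset.prod_eq_one fun c hc => ?_
  obtain ⟨l, hl, rfl⟩ := Multiset.mem_map.1 hc
  exact PowerSeries.inv_mul_cancel _ (by simp [zero_pow (hS l hl).ne'])

end PowerSeries

/-- If two finite multisets of positive integers give rise to the same Euler-type product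
`∏_{l ∈ S} (1 - u^l)⁻¹` of formal power series over `ℚ`, then the multisets are equal. -/
theorem multiset_eq_of_euler_product_eq
    (S₁ S₂ : Multiset ℕ) (hS₁ : ∀ l ∈ S₁, 0 < l) (hS₂ : ∀ l ∈ S₂, 0 < l)
    (h : (S₁.map (fun l => (1 - (PowerSeries.X : PowerSeries ℚ) ^ l)⁻¹)).prod
       = (S₂.map (fun l => (1 - (PowerSeries.X : PowerSeries ℚ) ^ l)⁻¹)).prod) :
    S₁ = S₂ := by
  have hinv₁ := prod_map_inv_one_sub_X_pow_mul_prodOneSubXPow (k := ℚ) hS₁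
  have hinv₂ := prod_map_inv_one_sub_X_pow_mul_prodOneSubXPow (k := ℚ) hS₂
  rw [h, mul_comm] at hinv₁
  exact eq_of_prodOneSubXPow_eq hS₁ hS₂ (left_inv_eq_right_inv hinv₁ hinv₂)
end

section
/- Let a : ℕ → ℕ be a function with a(0) = 0 such that Σ_n a(n) x^n has radius of convergence > 0 in a suitable sense (a is supported on positive integers and the infinite product ∏_{n≥1} (1 - u^n)^{-a(n)} makes sense as a formal power series). If two such functions a, b satisfy ∏_{n≥1}(1 - u^n)^{-a(n)} = ∏_{n≥1}(1 - u^n)^{-b(n)} as formal power series over ℚ, then a = b. -/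
open PowerSeries Finset

/-!
Modulo `X ^ (m + 1)` one has `(1 - X ^ m)⁻¹ ≡ 1 + X ^ m`, hence `(1 - X ^ m)⁻¹ ^ c ≡ 1 + c X ^ m`.
Multiplying by this factor adds `c` times the constant coefficient (which is `1`) to the
coefficient of `X ^ m` and changes no lower coefficient. So the `m`-th coefficient of the partial
product up to `m` is that of the partial product up to `m - 1` plus `a m`; by strong induction the
latter products agree for `a` and `b`, and comparing `m`-th coefficients gives `a m = b m`.
-/

theorem coeff_mul_of_X_pow_succ_dvd_sub {R : Type*} [CommRing R] (φ : R⟦X⟧) {ψ : R⟦X⟧} {m : ℕ}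
    {t : R} (h : X ^ (m + 1) ∣ ψ - (1 + C t * X ^ m)) :
    coeff m (φ * ψ) = coeff m φ + t * constantCoeff φ := by
  obtain ⟨r, hr⟩ := h
  rw [sub_eq_iff_eq_add.mp hr, mul_add, map_add, mul_left_comm, coeff_X_pow_mul', if_neg (by omega),
    mul_add, mul_one, ← mul_assoc, map_add, coeff_mul_X_pow', if_pos le_rfl, Nat.sub_self,
    coeff_zero_eq_constantCoeff_apply, map_mul, constantCoeff_C]
  ring

theorem X_pow_succ_dvd_pow_sub_one_add_C_mul_X_pow {R : Type*} [CommRing R] {ψ : R⟦X⟧} {m : ℕ}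
    (hm : 0 < m) (h : X ^ (m + 1) ∣ ψ - (1 + X ^ m)) (c : ℕ) :
    X ^ (m + 1) ∣ ψ ^ c - (1 + C (c : R) * X ^ m) := by
  have hpow : X ^ (m + 1) ∣ ψ ^ c - (1 + X ^ m) ^ c := h.trans (sub_dvd_pow_sub_pow _ _ c)
  have hbinom : X ^ (m + 1) ∣ (1 + X ^ m) ^ c - (1 + C (c : R) * X ^ m) := by
    refine (pow_dvd_pow X (show m + 1 ≤ m * 2 by omega)).trans ?_
    convert sq_dvd_add_pow_sub_sub (X ^ m : R⟦X⟧) 1 c using 1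
    · rw [pow_mul]
    · rw [map_natCast]
      ring
  simpa using dvd_add hpow hbinom

theorem X_pow_succ_dvd_inv_one_sub_X_pow_sub {K : Type*} [Field K] {m : ℕ} (hm : 0 < m) :
    X ^ (m + 1) ∣ (1 - X ^ m : K⟦X⟧)⁻¹ - (1 + X ^ m) := by
  set Q : K⟦X⟧ := (1 - X ^ m)⁻¹
  have hQ : (1 - X ^ m) * Q = 1 :=
    PowerSeries.mul_inv_cancel _ (by simp [hm.ne'])
  have : Q - (1 + X ^ m) = X ^ (m + 1) * (X ^ (m - 1) * Q) := by
    rw [← mul_assoc, ← pow_add, show m + 1 + (m - 1) = m + m by omega, pow_add]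
    linear_combination (1 + X ^ m) * hQ
  exact ⟨_, this⟩

section EulerProduct

variable (K : Type*) [Field K]

noncomputable def eulerPartialProduct (a : ℕ → ℕ) (k : ℕ) : K⟦X⟧ :=
  ∏ n ∈ Icc 1 k, ((1 - X ^ n)⁻¹) ^ (a n)

theorem constantCoeff_eulerPartialProduct (a : ℕ → ℕ) (k : ℕ) :
    constantCoeff (eulerPartialProduct K a k) = 1 := by
  refine (map_prod _ _ _).trans (prod_eq_one fun n hn => ?_)
  simp [constantCoeff_inv, Nat.one_le_iff_ne_zero.mp (mem_Icc.mp hn).1]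

theorem coeff_eulerPartialProduct_succ (a : ℕ → ℕ) (m : ℕ) :
    coeff (m + 1) (eulerPartialProduct K a (m + 1)) =
      coeff (m + 1) (eulerPartialProduct K a m) + a (m + 1) := by
  rw [eulerPartialProduct, prod_Icc_succ_top (by omega), ← eulerPartialProduct,
    coeff_mul_of_X_pow_succ_dvd_sub _ (X_pow_succ_dvd_pow_sub_one_add_C_mul_X_pow m.succ_pos
      (X_pow_succ_dvd_inv_one_sub_X_pow_sub m.succ_pos) _), constantCoeff_eulerPartialProduct,
    mul_one]

end EulerProduct

/-- The infinite product is encoded coefficient-wise: the `k`-th coefficient of the full product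
equals the `k`-th coefficient of the finite partial product over `1 ≤ n ≤ k`, since every further
factor is `1 + (terms of degree > k)`. -/
theorem exponents_eq_of_infinite_euler_product_eq
    (a b : ℕ → ℕ) (ha0 : a 0 = 0) (hb0 : b 0 = 0)
    (h : ∀ k : ℕ,
      (PowerSeries.coeff (R := ℚ) k)
        (∏ n ∈ Finset.Icc 1 k, ((1 - (PowerSeries.X : PowerSeries ℚ) ^ n)⁻¹) ^ (a n))
      = (PowerSeries.coeff (R := ℚ) k)
        (∏ n ∈ Finset.Icc 1 k, ((1 - (PowerSeries.X : PowerSeries ℚ) ^ n)⁻¹) ^ (b n))) :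
    a = b := by
  funext n
  induction n using Nat.strong_induction_on with
  | _ n ih =>
    cases n with
    | zero => rw [ha0, hb0]
    | succ m =>
      have hprev : eulerPartialProduct ℚ a m = eulerPartialProduct ℚ b m :=
        prod_congr rfl fun n hn => by rw [ih n (by grind)]
      have hm := h (m + 1)
      rw [← eulerPartialProduct, ← eulerPartialProduct, coeff_eulerPartialProduct_succ,
        coeff_eulerPartialProduct_succ, hprev, add_right_inj] at hm
      exact_mod_cast hm
end

section
/- Let q ≥ 2 be a natural number and let S₁, S₂ be finite multisets of positive integers. Define F(u) = ∏_{l ∈ S₂}(1 - u^l) · ∏_{l ∈ S₁}(1 - (qu)^{-l}) and G(u) = ∏_{l ∈ S₁}(1 - u^l) · ∏_{l ∈ S₂}(1 - (qu)^{-l}) as functions on ℂ \ {0}. If F = G on ℂ \ {0}, and moreover the zeros of ∏_{l ∈ S_i}(1 - u^l) lie on the unit circle while the zeros of ∏_{l ∈ S_i}(1 - (qu)^{-l}) lie on the circle of radius 1/q, then the set of zeros on the unit circle (with multiplicity) of ∏_{l ∈ S₁}(1 - u^l) equals that of ∏_{l ∈ S₂}(1 - u^l), and hence S₁ = S₂ as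 multisets. -/
open Complex

/-- The multiset of roots (on the unit circle) of `∏_{l ∈ S} (1 - u^l)`. -/
noncomputable def unitCircleRoots (S : Multiset ℕ) : Multiset ℂ :=
  S.bind fun l => (Multiset.range l).map fun k =>
    Complex.exp (2 * Real.pi * Complex.I * k / l)

/-!
Clearing denominators turns the functional equation into the polynomial identity
`P₂ · Q₁ · (qX)^(∑ S₂) = P₁ · Q₂ · (qX)^(∑ S₁)`, where `P_S = ∏_{l ∈ S} (1 - X^l)` and
`Q_S = ∏_{l ∈ S} ((qX)^l - 1)`. The roots of `P_S` lie on the unit circle, while those of `Q_S`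
lie on the circle of radius `1/q`, so comparing the roots on the unit circle gives
`roots P₁ = roots P₂`. A primitive `m`-th root of unity is a root of `P_S` of multiplicity
`#{l ∈ S | m ∣ l}`, and these divisor counts determine `S`: the largest element `M` of `S` is the
only one divisible by `M`, so its multiplicity can be read off and `M` removed.
-/

open Polynomial

namespace Multiset

theorem countP_dvd_eq_count_of_forall_le {S : Multiset ℕ} {M : ℕ}
    (hS : ∀ l ∈ S, 0 < l ∧ l ≤ M) : S.countP (M ∣ ·) = S.count M :=
  countP_congr rfl fun l hl => propext
    ⟨fun hdvd => Nat.le_antisymm (Nat.le_of_dvd (hS l hl).1 hdvd) (hS l hl).2,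
      fun h => h ▸ dvd_rfl⟩

theorem eq_of_forall_countP_dvd_eq {S₁ S₂ : Multiset ℕ}
    (hS₁ : ∀ l ∈ S₁, 0 < l) (hS₂ : ∀ l ∈ S₂, 0 < l)
    (h : ∀ m, 0 < m → S₁.countP (m ∣ ·) = S₂.countP (m ∣ ·)) : S₁ = S₂ := by
  induction hn : card S₁ + card S₂ using Nat.strong_induction_on generalizing S₁ S₂ with
  | _ n ih =>
    rcases eq_or_ne (S₁ + S₂) 0 with h0 | hne
    · rw [add_eq_zero] at h0
      rw [h0.1, h0.2]
    obtain ⟨M, hM, hMmax⟩ := (S₁ + S₂).toFinset.exists_max_image id (toFinset_nonempty.mpr hne)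
    rw [mem_toFinset] at hM
    have hpos : ∀ l ∈ S₁ + S₂, 0 < l := by
      simpa only [mem_add, or_imp, forall_and] using And.intro hS₁ hS₂
    have hbound : ∀ l ∈ S₁ + S₂, 0 < l ∧ l ≤ M :=
      fun l hl => ⟨hpos l hl, hMmax l (mem_toFinset.mpr hl)⟩
    have hcount : S₁.count M = S₂.count M := by
      rw [← countP_dvd_eq_count_of_forall_le fun l hl => hbound l (mem_add.mpr (.inl hl)),
        ← countP_dvd_eq_count_of_forall_le fun l hl => hbound l (mem_add.mpr (.inr hl)),
        h M (hpos M hM)]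
    have hM₁ : M ∈ S₁ :=
      (mem_add.mp hM).elim id fun hM₂ => count_pos.mp (hcount ▸ count_pos.mpr hM₂)
    have hM₂ : M ∈ S₂ := count_pos.mp (hcount ▸ count_pos.mpr hM₁)
    obtain ⟨T₁, rfl⟩ := exists_cons_of_mem hM₁
    obtain ⟨T₂, rfl⟩ := exists_cons_of_mem hM₂
    congr 1
    refine ih (card T₁ + card T₂) (by simp [← hn]; omega)
      (fun l hl => hS₁ l (mem_cons_of_mem hl)) (fun l hl => hS₂ l (mem_cons_of_mem hl))
      (fun m hm => ?_) rfl
    simpa only [countP_cons, add_left_inj] using h m hm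

theorem prod_map_pow_eq_pow_sum {M : Type*} [CommMonoid M] (a : M) (S : Multiset ℕ) :
    (S.map (a ^ ·)).prod = a ^ S.sum := by
  induction S using Multiset.induction_on with
  | empty => simp
  | cons l S ih => simp [ih, pow_add]

theorem prod_map_pow_sub_one {K : Type*} [Field K] {v : K} (hv : v ≠ 0) (S : Multiset ℕ) :
    (S.map fun l => v ^ l - 1).prod = (S.map fun l => 1 - v⁻¹ ^ l).prod * v ^ S.sum := by
  rw [← prod_map_pow_eq_pow_sum, ← prod_map_mul]
  refine congrArg _ (map_congr rfl fun l _ => ?_)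
  rw [sub_mul, one_mul, ← mul_pow, inv_mul_cancel₀ hv, one_pow]

end Multiset

theorem Complex.count_nthRoots_one {ζ : ℂ} {m l : ℕ} (hζ : IsPrimitiveRoot ζ m) (hl : 0 < l) :
    (nthRoots l (1 : ℂ)).count ζ = if m ∣ l then 1 else 0 := by
  simp only [Multiset.count_eq_of_nodup (isPrimitiveRoot_exp l hl.ne').nthRoots_one_nodup,
    mem_nthRoots hl, hζ.pow_eq_one_iff_dvd]

theorem Complex.count_bind_nthRoots_one {ζ : ℂ} {m : ℕ} (hζ : IsPrimitiveRoot ζ m)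
    {S : Multiset ℕ} (hS : ∀ l ∈ S, 0 < l) :
    (S.bind fun l => nthRoots l (1 : ℂ)).count ζ = S.countP (m ∣ ·) := by
  induction S using Multiset.induction_on with
  | empty => simp
  | cons l S ih =>
    rw [Multiset.forall_mem_cons] at hS
    rw [Multiset.cons_bind, Multiset.count_add, Multiset.countP_cons, ih hS.2,
      count_nthRoots_one hζ hS.1, add_comm]

theorem Complex.eq_of_bind_nthRoots_one_eq {S₁ S₂ : Multiset ℕ}
    (hS₁ : ∀ l ∈ S₁, 0 < l) (hS₂ : ∀ l ∈ S₂, 0 < l)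
    (h : (S₁.bind fun l => nthRoots l (1 : ℂ)) = S₂.bind fun l => nthRoots l 1) : S₁ = S₂ := by
  refine Multiset.eq_of_forall_countP_dvd_eq hS₁ hS₂ fun m hm => ?_
  have hζ := isPrimitiveRoot_exp m hm.ne'
  rw [← count_bind_nthRoots_one hζ hS₁, ← count_bind_nthRoots_one hζ hS₂, h]

theorem Polynomial.roots_eq_of_mul_eq_mul {R : Type*} [CommRing R] [IsDomain R]
    {p₁ p₂ q₁ q₂ : R[X]} (h : p₁ * q₂ = p₂ * q₁) (h0 : p₁ * q₂ ≠ 0) {U : Set R}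
    (hp₁ : ∀ z ∈ p₁.roots, z ∈ U) (hp₂ : ∀ z ∈ p₂.roots, z ∈ U)
    (hq₁ : ∀ z ∈ q₁.roots, z ∉ U) (hq₂ : ∀ z ∈ q₂.roots, z ∉ U) : p₁.roots = p₂.roots := by
  classical
  have hU := congrArg (fun p : R[X] => p.roots.filter (· ∈ U)) h
  simp only [roots_mul h0, roots_mul (h ▸ h0), Multiset.filter_add] at hU
  rwa [Multiset.filter_eq_self.mpr hp₁, Multiset.filter_eq_self.mpr hp₂,
    Multiset.filter_eq_nil.mpr hq₁, Multiset.filter_eq_nil.mpr hq₂, add_zero, add_zero] at hU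

section Products

variable {R : Type*} [CommRing R]

noncomputable def oneSubPowProd (S : Multiset ℕ) : R[X] :=
  (S.map fun l => 1 - X ^ l).prod

noncomputable def scaledPowSubOneProd (c : R) (S : Multiset ℕ) : R[X] :=
  (S.map fun l => (C c * X) ^ l - 1).prod

theorem eval_oneSubPowProd (S : Multiset ℕ) (u : R) :
    (oneSubPowProd S).eval u = (S.map fun l => 1 - u ^ l).prod := by
  simp [oneSubPowProd, eval_multiset_prod]

theorem eval_scaledPowSubOneProd (c : R) (S : Multiset ℕ) (u : R) :
    (scaledPowSubOneProd c S).eval u = (S.map fun l => (c * u) ^ l - 1).prod := by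
  simp [scaledPowSubOneProd, eval_multiset_prod]

theorem zero_notMem_map_one_sub_X_pow [Nontrivial R] {S : Multiset ℕ} (hS : ∀ l ∈ S, 0 < l) :
    (0 : R[X]) ∉ S.map fun l => 1 - X ^ l := by
  intro h0
  obtain ⟨l, hl, he⟩ := Multiset.mem_map.mp h0
  simpa [zero_pow (hS l hl).ne'] using congrArg (eval 0) he

theorem oneSubPowProd_ne_zero [IsDomain R] {S : Multiset ℕ} (hS : ∀ l ∈ S, 0 < l) :
    (oneSubPowProd S : R[X]) ≠ 0 :=
  Multiset.prod_ne_zero (zero_notMem_map_one_sub_X_pow hS)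

theorem scaledPowSubOneProd_ne_zero [IsDomain R] (c : R) {S : Multiset ℕ}
    (hS : ∀ l ∈ S, 0 < l) : scaledPowSubOneProd c S ≠ 0 := by
  refine Multiset.prod_ne_zero fun h0 => ?_
  obtain ⟨l, hl, he⟩ := Multiset.mem_map.mp h0
  simpa [zero_pow (hS l hl).ne'] using congrArg (eval 0) he

theorem roots_oneSubPowProd [IsDomain R] {S : Multiset ℕ} (hS : ∀ l ∈ S, 0 < l) :
    (oneSubPowProd S : R[X]).roots = S.bind fun l => nthRoots l 1 := by
  rw [oneSubPowProd, roots_multiset_prod _ (zero_notMem_map_one_sub_X_pow hS), Multiset.bind_map]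
  refine Multiset.bind_congr fun l _ => ?_
  rw [nthRoots, ← roots_neg, neg_sub, C_1]

end Products

theorem oneSubPowProd_mul_eq_of_forall_ne_zero {K : Type*} [Field K] [Infinite K] {c : K}
    (hc : c ≠ 0) {S₁ S₂ : Multiset ℕ}
    (h : ∀ u : K, u ≠ 0 →
      (S₂.map (fun l => 1 - u ^ l)).prod * (S₁.map (fun l => 1 - ((c * u)⁻¹) ^ l)).prod
      = (S₁.map (fun l => 1 - u ^ l)).prod * (S₂.map (fun l => 1 - ((c * u)⁻¹) ^ l)).prod) :
    oneSubPowProd S₂ * (scaledPowSubOneProd c S₁ * (C c * X) ^ S₂.sum)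
      = oneSubPowProd S₁ * (scaledPowSubOneProd c S₂ * (C c * X) ^ S₁.sum) := by
  refine eq_of_infinite_eval_eq _ _ ((Set.finite_singleton 0).infinite_compl.mono fun u hu => ?_)
  have hu : u ≠ 0 := hu
  have hcu : c * u ≠ 0 := mul_ne_zero hc hu
  simp only [Set.mem_ofPred_eq, eval_mul, eval_pow, eval_C, eval_X, eval_oneSubPowProd,
    eval_scaledPowSubOneProd, Multiset.prod_map_pow_sub_one hcu]
  linear_combination (c * u) ^ S₁.sum * (c * u) ^ S₂.sum * h u hu

theorem norm_eq_one_of_mem_roots_oneSubPowProd {S : Multiset ℕ} (hS : ∀ l ∈ S, 0 < l) {z : ℂ}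
    (hz : z ∈ (oneSubPowProd S : ℂ[X]).roots) : ‖z‖ = 1 := by
  rw [roots_oneSubPowProd hS, Multiset.mem_bind] at hz
  obtain ⟨l, hl, hzl⟩ := hz
  exact norm_eq_one_of_pow_eq_one ((mem_nthRoots (hS l hl)).mp hzl) (hS l hl).ne'

theorem norm_lt_one_of_mem_roots_scaledPowSubOneProd_mul {c : ℂ} (hc : 1 < ‖c‖)
    {S : Multiset ℕ} (hS : ∀ l ∈ S, 0 < l) (n : ℕ) {z : ℂ}
    (hz : z ∈ (scaledPowSubOneProd c S * (C c * X) ^ n).roots) : ‖z‖ < 1 := by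
  have hcz : ‖c * z‖ ≤ 1 := by
    have hroot := (mem_roots'.mp hz).2
    simp only [IsRoot, eval_mul, eval_pow, eval_C, eval_X, eval_scaledPowSubOneProd,
      mul_eq_zero, Multiset.prod_eq_zero_iff, Multiset.mem_map, sub_eq_zero] at hroot
    rcases hroot with ⟨l, hl, hpow⟩ | hpow
    · exact (norm_eq_one_of_pow_eq_one hpow (hS l hl).ne').le
    · simp [eq_zero_of_pow_eq_zero hpow]
  rw [norm_mul] at hcz
  nlinarith [norm_nonneg z]

/-- Zero-separation argument: if
`∏_{l ∈ S₂}(1 - u^l) · ∏_{l ∈ S₁}(1 - (qu)^{-l}) = ∏_{l ∈ S₁}(1 - u^l) · ∏_{l ∈ S₂}(1 - (qu)^{-l})`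
for all `u ≠ 0`, with `q ≥ 2` (so the circles of radii `1` and `1/q` are disjoint), then the
unit-circle zero multisets of `∏_{l ∈ S₁}(1 - u^l)` and `∏_{l ∈ S₂}(1 - u^l)` coincide, and
hence `S₁ = S₂` as multisets. -/
theorem multiset_eq_of_functional_equation_products_eq
    (q : ℕ) (hq : 2 ≤ q)
    (S₁ S₂ : Multiset ℕ) (hS₁ : ∀ l ∈ S₁, 0 < l) (hS₂ : ∀ l ∈ S₂, 0 < l)
    (h : ∀ u : ℂ, u ≠ 0 →
      (S₂.map (fun l => 1 - u ^ l)).prod * (S₁.map (fun l => 1 - (((q : ℂ) * u)⁻¹) ^ l)).prod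
      = (S₁.map (fun l => 1 - u ^ l)).prod *
          (S₂.map (fun l => 1 - (((q : ℂ) * u)⁻¹) ^ l)).prod) :
    unitCircleRoots S₁ = unitCircleRoots S₂ ∧ S₁ = S₂ := by
  have hq₁ : 1 < ‖(q : ℂ)‖ := by rw [norm_natCast]; exact_mod_cast hq
  have hq₀ : (q : ℂ) ≠ 0 := norm_pos_iff.mp (one_pos.trans hq₁)
  have hroots : (oneSubPowProd S₂ : ℂ[X]).roots = (oneSubPowProd S₁).roots :=
    roots_eq_of_mul_eq_mul (U := {z | ‖z‖ = 1}) (oneSubPowProd_mul_eq_of_forall_ne_zero hq₀ h)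
      (mul_ne_zero (oneSubPowProd_ne_zero hS₂) (mul_ne_zero (scaledPowSubOneProd_ne_zero _ hS₁)
        (pow_ne_zero _ (mul_ne_zero (C_ne_zero.mpr hq₀) X_ne_zero))))
      (fun _ => norm_eq_one_of_mem_roots_oneSubPowProd hS₂)
      (fun _ => norm_eq_one_of_mem_roots_oneSubPowProd hS₁)
      (fun _ hz => (norm_lt_one_of_mem_roots_scaledPowSubOneProd_mul hq₁ hS₂ _ hz).ne)
      (fun _ hz => (norm_lt_one_of_mem_roots_scaledPowSubOneProd_mul hq₁ hS₁ _ hz).ne)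
  have hS : S₁ = S₂ := eq_of_bind_nthRoots_one_eq hS₁ hS₂ <| by
    rw [← roots_oneSubPowProd hS₁, ← roots_oneSubPowProd hS₂, hroots]
  exact ⟨congrArg unitCircleRoots hS, hS⟩
end
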